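/- arXiv:2106.08742 — 2 statements merged into one kernel-verified Lean document; each statement's English description precedes it below -/
import Mathlib

section
/- If G₁ and G₂ are residually finite groups with isomorphic profinite completions, then G₁ is uniformly amenable if and only if G₂ is uniformly amenable. -/
/-!
Uniform amenability with a fixed Følner bound `m` passes to subgroups: a Følner set splits along
right cosets, and one piece is again Følner. It passes to quotients with a bound depending only on
`m`: by a layer-cake decomposition of the push-forward of a Følner set, one level set is Følner
downstairs. Splitting a Følner set into `S⁻¹S`-connected components shows that it can be taken
inside a ball of radius `m ε |S|`; hence a group whose finite sets are separated by maps into groups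
with a common bound `m` satisfies that bound too. For residually finite `G`, `G` embeds in its
profinite completion `Ĝ` and finite subsets of `Ĝ` are separated by the quotients `G/N`, so `G` is
uniformly amenable iff `Ĝ` is, and this depends only on the isomorphism type of `Ĝ`.
-/

open Pointwise

attribute [local instance] Classical.propDecidable

/-- The (finite-index normal) subgroups indexing the profinite completion. -/
def FIN (G : Type*) [Group G] : Type _ := {N : Subgroup G // N.Normal ∧ N.FiniteIndex}

instance {G : Type*} [Group G] (N : FIN G) : (N.1).Normal := N.2.1

/-- The profinite completion of a group `G`: the inverse limit of all finite quotients
`G/N` over finite-index normal subgroups `N`, realized as the subgroup of compatible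
families in `∏_N G/N`. -/
def profiniteCompletion (G : Type*) [Group G] : Subgroup (∀ N : FIN G, G ⧸ N.1) where
  carrier := {f | ∀ (N M : FIN G) (h : N.1 ≤ M.1),
    QuotientGroup.map N.1 M.1 (MonoidHom.id G) (fun _ hx => h hx) (f N) = f M}
  one_mem' := by intro N M h; simp
  mul_mem' := by intro a b ha hb N M h; simp [Pi.mul_apply, map_mul, ha N M h, hb N M h]
  inv_mem' := by intro a ha N M h; simp [Pi.inv_apply, map_inv, ha N M h]

/-- A group is residually finite: every nontrivial element survives in some finite
quotient. -/
def ResiduallyFinite (G : Type*) [Group G] : Prop :=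
  ∀ g : G, g ≠ 1 → ∃ N : Subgroup G, N.Normal ∧ N.FiniteIndex ∧ g ∉ N

/-- A group is uniformly amenable. -/
def UniformlyAmenableGroup (K : Type*) [Group K] : Prop :=
  ∃ m : ℝ → ℕ → ℕ, ∀ ε : ℝ, 0 < ε → ∀ S : Finset K,
    ∃ F : Finset K, F.Nonempty ∧ F.card ≤ m ε S.card ∧
      ((S * F).card : ℝ) ≤ (1 + ε) * F.card

open Function Finset

theorem Finset.exists_succ_subset_and_lt_card {α : Type*} {f : ℕ → Finset α} (hf : Monotone f)
    (h0 : (f 0).Nonempty) {F : Finset α} (hF : ∀ j, f j ⊆ F) :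
    ∃ j, f (j + 1) ⊆ f j ∧ j < (f j).card := by
  by_contra! h
  have hgrow : ∀ j, j < (f j).card := by
    intro j
    induction j with
    | zero => exact h0.card_pos
    | succ j ih =>
      by_cases hstable : f (j + 1) ⊆ f j
      · exact absurd (h j hstable) (not_le.2 ih)
      · have := card_lt_card ((hf (j.le_add_right 1)).ssubset_of_not_superset hstable)
        omega
  exact absurd (card_le_card (hF F.card)) (not_le.2 (hgrow F.card))

theorem Finset.exists_nonempty_le_mul_card_of_sum_le {ι γ : Type*} {I : Finset ι}
    {L : ι → Finset γ} {a : ι → ℕ} {c : ℝ} (ha : ∀ i, L i = ∅ → a i = 0)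
    (hne : ∃ i ∈ I, (L i).Nonempty) (hsum : (∑ i ∈ I, a i : ℝ) ≤ c * ∑ i ∈ I, ((L i).card : ℝ)) :
    ∃ i ∈ I, (L i).Nonempty ∧ (a i : ℝ) ≤ c * (L i).card := by
  by_contra! h
  obtain ⟨i, hi, hLi⟩ := hne
  rw [mul_sum] at hsum
  refine (sum_lt_sum (fun j hj => ?_) ⟨i, hi, h i hi hLi⟩).not_ge hsum
  rcases (L j).eq_empty_or_nonempty with hLj | hLj
  · simp [hLj, ha j hLj]
  · exact (h j hj hLj).le

section Group

variable {K : Type*} [Group K]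

theorem Finset.card_mul_le_card_add_sum_card_smul_sdiff (T L : Finset K) :
    (T * L).card ≤ L.card + ∑ g ∈ T, (g • L \ L).card := by
  calc (T * L).card ≤ (L ∪ T.biUnion fun g => g • L \ L).card := card_le_card fun x hx => by
        obtain ⟨g, hg, l, hl, rfl⟩ := mem_mul.1 hx
        by_cases h : g * l ∈ L
        · exact mem_union_left _ h
        · exact mem_union_right _
            (mem_biUnion.2 ⟨g, hg, mem_sdiff.2 ⟨smul_mem_smul_finset hl, h⟩⟩)
    _ ≤ L.card + (T.biUnion fun g => g • L \ L).card := card_union_le _ _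
    _ ≤ _ := Nat.add_le_add_left card_biUnion_le _

theorem Finset.exists_subset_pow_mul_of_mem {F T : Finset K} (hT : 1 ∈ T) {c : K} (hc : c ∈ F) :
    ∃ A ⊆ F, c ∈ A ∧ A ⊆ T ^ A.card * {c} ∧ ∀ a ∈ A, ∀ b ∈ F, b * a⁻¹ ∈ T → b ∈ A := by
  -- `ball` is kept opaque: elaborating `F ∩ (T ^ j * {c})` against unfolded goals is very slow.
  obtain ⟨ball, hball⟩ : ∃ ball : ℕ → Finset K, ∀ j, ball j = F ∩ (T ^ j * {c}) :=
    ⟨_, fun _ => rfl⟩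
  have hmono : Monotone ball := fun i j hij => by
    simpa only [hball] using
      inter_subset_inter_left (mul_subset_mul_right (pow_subset_pow_right hT hij))
  have hc0 : c ∈ ball 0 := by simp [hball, hc]
  obtain ⟨j, hstable, hj⟩ := exists_succ_subset_and_lt_card hmono ⟨c, hc0⟩
    fun j => hball j ▸ inter_subset_left
  have hsub : ∀ j, ball j ⊆ T ^ j * {c} := fun j => hball j ▸ inter_subset_right
  refine ⟨ball j, hball j ▸ inter_subset_left, hmono j.zero_le hc0,
    (hsub j).trans (mul_subset_mul_right (pow_subset_pow_right hT hj.le)),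
    fun a ha b hb hba => hstable ?_⟩
  rw [hball, pow_succ', mul_assoc]
  refine mem_inter.2 ⟨hb, ?_⟩
  simpa using mul_mem_mul hba (hsub j ha)

end Group

section LevelSets

variable {α β : Type*} (f : α → β)

noncomputable def fiberCard (F : Finset α) (b : β) : ℕ := (F.filter (f · = b)).card

noncomputable def levelSet (F : Finset α) (t : ℕ) : Finset β :=
  (F.image f).filter (t < fiberCard f F ·)

variable {f}

theorem mem_levelSet {F : Finset α} {t : ℕ} {b : β} :
    b ∈ levelSet f F t ↔ t < fiberCard f F b := by
  refine mem_filter.trans (and_iff_right_of_imp fun h => ?_)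
  obtain ⟨a, ha⟩ := card_pos.1 (t.zero_le.trans_lt h)
  exact mem_image.2 ⟨a, (mem_filter.1 ha).1, (mem_filter.1 ha).2⟩

theorem fiberCard_le_add_fiberCard_sdiff (F F' : Finset α) (b : β) :
    fiberCard f F' b ≤ fiberCard f F b + fiberCard f (F' \ F) b := by
  unfold fiberCard
  rw [← card_union_of_disjoint (disjoint_filter_filter disjoint_sdiff), ← filter_union,
    union_sdiff_self_eq_union]
  exact card_le_card (filter_subset_filter _ subset_union_right)

variable (f)

theorem sum_card_levelSet (F : Finset α) :
    ∑ t ∈ range F.card, (levelSet f F t).card = F.card := by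
  calc ∑ t ∈ range F.card, (levelSet f F t).card
      = ∑ b ∈ F.image f, ((range F.card).filter (· < fiberCard f F b)).card :=
        sum_card_bipartiteAbove_eq_sum_card_bipartiteBelow (fun t b => t < fiberCard f F b)
    _ = ∑ b ∈ F.image f, fiberCard f F b := sum_congr rfl fun b _ => by
        have hle : fiberCard f F b ≤ F.card := card_filter_le _ _
        rw [show (range F.card).filter (· < fiberCard f F b) = range (fiberCard f F b) by
          ext t; simp only [mem_filter, mem_range]; exact ⟨And.right, fun h => ⟨h.trans_le hle, h⟩⟩,
          card_range]
    _ = F.card := (card_eq_sum_card_fiberwise fun a ha => mem_image_of_mem f ha).symm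

theorem sum_card_levelSet_sdiff_le (F F' : Finset α) (n : ℕ) :
    ∑ t ∈ range n, (levelSet f F' t \ levelSet f F t).card ≤ (F' \ F).card := by
  have hdiff : ∀ t, levelSet f F' t \ levelSet f F t =
      (F'.image f).filter (fun b => t < fiberCard f F' b ∧ ¬ t < fiberCard f F b) := by
    intro t
    ext b
    simp only [mem_sdiff, mem_filter, mem_levelSet]
    exact ⟨fun h => ⟨(mem_filter.1 (mem_levelSet.2 h.1)).1, h⟩, fun h => h.2⟩
  calc ∑ t ∈ range n, (levelSet f F' t \ levelSet f F t).card
      = ∑ b ∈ F'.image f, ((range n).filter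
          (fun t => t < fiberCard f F' b ∧ ¬ t < fiberCard f F b)).card := by
        simp only [hdiff]
        exact sum_card_bipartiteAbove_eq_sum_card_bipartiteBelow
          (fun t b => t < fiberCard f F' b ∧ ¬ t < fiberCard f F b)
    _ ≤ ∑ b ∈ F'.image f, fiberCard f (F' \ F) b := sum_le_sum fun b _ => by
        have := fiberCard_le_add_fiberCard_sdiff (f := f) F F' b
        calc _ ≤ (Ico (fiberCard f F b) (fiberCard f F' b)).card :=
              card_le_card fun t ht => by simp only [mem_filter, mem_Ico] at ht ⊢; omega
          _ ≤ fiberCard f (F' \ F) b := by rw [Nat.card_Ico]; omega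
    _ = (F' \ F).card :=
        (card_eq_sum_card_fiberwise fun a ha => mem_image_of_mem f (mem_sdiff.1 ha).1).symm

theorem levelSet_smul {G Q : Type*} [Group G] [Group Q] (φ : G →* Q) (F : Finset G) (g : G)
    (t : ℕ) : levelSet φ (g • F) t = φ g • levelSet φ F t := by
  have hfiber : ∀ q, fiberCard φ (g • F) q = fiberCard φ F ((φ g)⁻¹ * q) := fun q => by
    unfold fiberCard
    rw [smul_finset_def, filter_image, card_image_of_injective _ (MulAction.injective g)]
    congr 1
    refine filter_congr fun x _ => ?_
    simp [eq_inv_mul_iff_mul_eq]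
  ext q
  rw [← inv_smul_mem_iff, mem_levelSet, mem_levelSet, hfiber, smul_eq_mul]

end LevelSets

section Folner

variable {K : Type*} [Group K]

def IsFolnerSet (ε : ℝ) (S F : Finset K) : Prop :=
  F.Nonempty ∧ ((S * F).card : ℝ) ≤ (1 + ε) * F.card

variable (K) in
def HasFolnerBound (m : ℝ → ℕ → ℕ) : Prop :=
  ∀ ε : ℝ, 0 < ε → ∀ S : Finset K, ∃ F, IsFolnerSet ε S F ∧ F.card ≤ m ε S.card

theorem uniformlyAmenableGroup_iff : UniformlyAmenableGroup K ↔ ∃ m, HasFolnerBound K m :=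
  exists_congr fun _ => forall₂_congr fun _ _ => forall_congr' fun _ =>
    exists_congr fun _ => by unfold IsFolnerSet; tauto

variable {ε : ℝ} {S F : Finset K}

theorem IsFolnerSet.mono {ε' : ℝ} {S' : Finset K} (hF : IsFolnerSet ε S F) (hS : S' ⊆ S)
    (hε : ε ≤ ε') : IsFolnerSet ε' S' F := by
  refine ⟨hF.1, le_trans ?_ (hF.2.trans ?_)⟩
  · exact_mod_cast card_le_card (mul_subset_mul_right hS)
  · gcongr

theorem IsFolnerSet.mul_singleton (hF : IsFolnerSet ε S F) (g : K) :
    IsFolnerSet ε S (F * {g}) := by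
  refine ⟨hF.1.mul (singleton_nonempty g), ?_⟩
  rw [← mul_assoc, card_mul_singleton, card_mul_singleton]
  exact hF.2

/-- The Følner inequality for `F` is the sum of those for `A` and `F \ A`. -/
theorem IsFolnerSet.or_sdiff {A : Finset K} (hF : IsFolnerSet ε S F) (hAF : A ⊆ F)
    (hdisj : Disjoint (S * A) (S * (F \ A))) :
    IsFolnerSet ε S A ∨ IsFolnerSet ε S (F \ A) := by
  rcases A.eq_empty_or_nonempty with rfl | hA
  · exact Or.inr (by simpa using hF)
  rcases (F \ A).eq_empty_or_nonempty with hB | hB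
  · rw [sdiff_eq_empty_iff_subset] at hB
    exact Or.inl (hAF.antisymm hB ▸ hF)
  by_contra! h
  simp only [IsFolnerSet, hA, hB, true_and, not_le] at h
  have hcard : (F.card : ℝ) = A.card + (F \ A).card := by
    rw [← card_sdiff_add_card_eq_card hAF]; push_cast; ring
  have hmul : ((S * F).card : ℝ) = (S * A).card + (S * (F \ A)).card := by
    rw [← Nat.cast_add, ← card_union_of_disjoint hdisj, ← mul_union, union_sdiff_of_subset hAF]
  have := hF.2
  rw [hmul, hcard, mul_add] at this
  linarith [h.1, h.2]

theorem disjoint_mul_mul_sdiff {A : Finset K}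
    (hA : ∀ a ∈ A, ∀ b ∈ F, b * a⁻¹ ∈ S⁻¹ * S → b ∈ A) :
    Disjoint (S * A) (S * (F \ A)) := by
  refine disjoint_left.2 fun x hx hx' => ?_
  obtain ⟨s, hs, a, ha, rfl⟩ := mem_mul.1 hx
  obtain ⟨t, ht, b, hb, hba⟩ := mem_mul.1 hx'
  refine (mem_sdiff.1 hb).2 (hA a ha b (mem_sdiff.1 hb).1 ?_)
  rw [show b * a⁻¹ = t⁻¹ * s by rw [eq_inv_mul_iff_mul_eq, ← mul_assoc, hba]; group]
  exact mul_mem_mul (inv_mem_inv ht) hs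

theorem IsFolnerSet.exists_subset_of_split (P : Finset K → Prop)
    (hP : ∀ F : Finset K, F.Nonempty →
      ∃ A ⊆ F, A.Nonempty ∧ P A ∧ Disjoint (S * A) (S * (F \ A)))
    (hF : IsFolnerSet ε S F) : ∃ A ⊆ F, IsFolnerSet ε S A ∧ P A := by
  induction F using Finset.strongInduction with
  | H F ih =>
    obtain ⟨A, hAF, hA, hPA, hdisj⟩ := hP F hF.1
    rcases hF.or_sdiff hAF hdisj with hFolA | hFolB
    · exact ⟨A, hAF, hFolA, hPA⟩
    · obtain ⟨A', hA'B, hA', hPA'⟩ := ih (F \ A) (sdiff_ssubset hAF hA) hFolB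
      exact ⟨A', hA'B.trans sdiff_subset, hA', hPA'⟩

theorem IsFolnerSet.exists_subset_subgroup {R : Subgroup K} (hS : ∀ s ∈ S, s ∈ R)
    (hF : IsFolnerSet ε S F) : ∃ A, IsFolnerSet ε S A ∧ A.card ≤ F.card ∧ ∀ a ∈ A, a ∈ R := by
  have hSS : ∀ g ∈ S⁻¹ * S, g ∈ R := by
    intro g hg
    obtain ⟨s, hs, t, ht, rfl⟩ := mem_mul.1 hg
    exact R.mul_mem (by simpa using R.inv_mem (hS _ (mem_inv'.1 hs))) (hS t ht)
  obtain ⟨A, hAF, hA, c, hAc⟩ := hF.exists_subset_of_split (fun A => ∃ c, ∀ a ∈ A, a * c⁻¹ ∈ R)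
    fun F ⟨c, hc⟩ => ⟨F.filter (· * c⁻¹ ∈ R), filter_subset _ _, ⟨c, by simp [hc]⟩,
      ⟨c, fun a ha => (mem_filter.1 ha).2⟩, disjoint_mul_mul_sdiff fun a ha b hb hba =>
        mem_filter.2 ⟨hb, by
          simpa using R.mul_mem (hSS _ hba) (mem_filter.1 ha).2⟩⟩
  refine ⟨A * {c⁻¹}, hA.mul_singleton _, (card_mul_singleton _ _).trans_le (card_le_card hAF),
    fun x hx => ?_⟩
  obtain ⟨a, ha, _, hc, rfl⟩ := mem_mul.1 hx
  rw [mem_singleton.1 hc]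
  exact hAc a ha

/-- Some `T`-connected component of `F` is a Følner set, and a component with `k` elements lies
in a translate of `T ^ k`. -/
theorem IsFolnerSet.exists_subset_pow {T : Finset K} (hT : 1 ∈ T) (hST : S⁻¹ * S ⊆ T)
    (hF : IsFolnerSet ε S F) : ∃ A, IsFolnerSet ε S A ∧ A.card ≤ F.card ∧ A ⊆ T ^ F.card := by
  obtain ⟨A, hAF, hA, c, hAc⟩ := hF.exists_subset_of_split (fun A => ∃ c, A ⊆ T ^ A.card * {c})
    fun F ⟨c, hc⟩ => by
      obtain ⟨A, hAF, hcA, hAc, hclosed⟩ := exists_subset_pow_mul_of_mem hT hc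
      exact ⟨A, hAF, ⟨c, hcA⟩, ⟨c, hAc⟩,
        disjoint_mul_mul_sdiff fun a ha b hb hba => hclosed a ha b hb (hST hba)⟩
  have hAc' : A * {c⁻¹} ⊆ T ^ A.card * {c} * {c⁻¹} := mul_subset_mul_right hAc
  rw [mul_assoc, singleton_mul_singleton, mul_inv_cancel, singleton_one, mul_one] at hAc'
  exact ⟨A * {c⁻¹}, hA.mul_singleton _, (card_mul_singleton _ _).trans_le (card_le_card hAF),
    hAc'.trans (pow_subset_pow_right hT (card_le_card hAF))⟩

/-- Layer-cake argument: each translate `s • F` moves only few points of `F`, hence moves few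
points of some level set of the push-forward of `F`. -/
theorem IsFolnerSet.exists_levelSet {Q : Type*} [Group Q] (φ : K →* Q) {δ : ℝ} (hS : 1 ∈ S)
    (hF : IsFolnerSet δ S F) : ∃ t, IsFolnerSet (S.card * δ) (S.image φ) (levelSet φ F t) := by
  have hmove : ∀ s ∈ S, ((s • F \ F).card : ℝ) ≤ δ * F.card := by
    intro s hs
    have hsub : s • F ∪ F ⊆ S * F :=
      union_subset (smul_finset_subset_mul hs) (by simpa using smul_finset_subset_mul (t := F) hS)
    have : ((s • F \ F).card : ℝ) + F.card ≤ (S * F).card := by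
      exact_mod_cast (card_sdiff_add_card (s • F) F).trans_le (card_le_card hsub)
    linarith [hF.2]
  have htotal : (∑ t ∈ range F.card, ∑ s ∈ S, (φ s • levelSet φ F t \ levelSet φ F t).card : ℝ)
      ≤ S.card * δ * ∑ t ∈ range F.card, ((levelSet φ F t).card : ℝ) := by
    have hcard : ∑ t ∈ range F.card, ((levelSet φ F t).card : ℝ) = F.card := by
      exact_mod_cast sum_card_levelSet φ F
    rw [hcard, sum_comm]
    calc ∑ s ∈ S, ∑ t ∈ range F.card, ((φ s • levelSet φ F t \ levelSet φ F t).card : ℝ)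
        ≤ ∑ s ∈ S, ((s • F \ F).card : ℝ) := sum_le_sum fun s _ => by
          simp only [← levelSet_smul]
          exact_mod_cast sum_card_levelSet_sdiff_le φ F (s • F) F.card
      _ ≤ ∑ s ∈ S, δ * F.card := sum_le_sum hmove
      _ = S.card * δ * F.card := by rw [sum_const, nsmul_eq_mul, mul_assoc]
  obtain ⟨x, hx⟩ := hF.1
  obtain ⟨t, -, hne, ht⟩ := exists_nonempty_le_mul_card_of_sum_le (L := levelSet φ F)
    (a := fun t => ∑ s ∈ S, (φ s • levelSet φ F t \ levelSet φ F t).card) (fun t h => by simp [h])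
    ⟨0, mem_range.2 (card_pos.2 ⟨x, hx⟩), φ x,
      mem_levelSet.2 (card_pos.2 ⟨x, mem_filter.2 ⟨hx, rfl⟩⟩)⟩
    (by push_cast; exact htotal)
  refine ⟨t, hne, ?_⟩
  have : ((S.image φ * levelSet φ F t).card : ℝ) ≤ (levelSet φ F t).card
      + ∑ s ∈ S, ((φ s • levelSet φ F t \ levelSet φ F t).card : ℕ) := by
    exact_mod_cast (card_mul_le_card_add_sum_card_smul_sdiff _ _).trans
      (Nat.add_le_add_left (sum_image_le_of_nonneg fun _ _ => Nat.zero_le _) _)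
  push_cast at this ht
  linarith

end Folner

section Bounds

variable {H K : Type*} [Group H] [Group K] {m : ℝ → ℕ → ℕ}

/-- The Følner set upstairs is taken for a lift of `insert 1 S`, which has `n` or `n + 1`
elements. -/
noncomputable def quotientFolnerBound (m : ℝ → ℕ → ℕ) (ε : ℝ) (n : ℕ) : ℕ :=
  max (m (ε / (n + 1)) n) (m (ε / (n + 1)) (n + 1))

theorem HasFolnerBound.of_surjective {φ : H →* K} (hφ : Surjective φ)
    (h : HasFolnerBound H m) : HasFolnerBound K (quotientFolnerBound m) := by
  intro ε hε S'
  set n := S'.card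
  obtain ⟨S, hSφ, hScard⟩ : ∃ S : Finset H, S.image φ = S' ∧ S.card = n :=
    ⟨S'.image (surjInv hφ), by simp [image_image, Function.comp_def, surjInv_eq hφ],
      card_image_of_injective _ (injective_surjInv hφ)⟩
  obtain ⟨F, hF, hFm⟩ := h (ε / (n + 1)) (by positivity) (insert 1 S)
  obtain ⟨t, ht⟩ := hF.exists_levelSet φ (mem_insert_self 1 S)
  have hcard : (insert 1 S).card = n ∨ (insert 1 S).card = n + 1 := by
    by_cases h1 : (1 : H) ∈ S
    · exact Or.inl (by rw [insert_eq_of_mem h1, hScard])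
    · exact Or.inr (by rw [card_insert_of_notMem h1, hScard])
  refine ⟨levelSet φ F t, ht.mono (hSφ ▸ image_subset_image (subset_insert 1 S)) ?_, ?_⟩
  · have : ((insert 1 S).card : ℝ) ≤ n + 1 := by
      rcases hcard with h | h <;> rw [h] <;> push_cast <;> linarith
    calc (insert 1 S).card * (ε / (n + 1)) ≤ (n + 1) * (ε / (n + 1)) := by gcongr
      _ = ε := by field_simp
  · calc (levelSet φ F t).card ≤ (F.image φ).card := card_le_card (filter_subset _ _)
      _ ≤ F.card := card_image_le
      _ ≤ m (ε / (n + 1)) (insert 1 S).card := hFm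
      _ ≤ quotientFolnerBound m ε n := by
        rcases hcard with h | h <;> rw [h] <;> simp [quotientFolnerBound]

theorem isFolnerSet_image_iff {φ : H →* K} {ε : ℝ} {S F : Finset H}
    (hφ : Set.InjOn φ ↑(insert 1 S * F)) :
    IsFolnerSet ε (S.image φ) (F.image φ) ↔ IsFolnerSet ε S F := by
  have hF : F ⊆ insert 1 S * F := subset_mul_right F (mem_insert_self 1 S)
  have hSF : S * F ⊆ insert 1 S * F := mul_subset_mul_right (subset_insert 1 S)
  simp only [IsFolnerSet, ← image_mul, card_image_of_injOn (hφ.mono hF),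
    card_image_of_injOn (hφ.mono hSF), image_nonempty]

theorem HasFolnerBound.of_injective {φ : H →* K} (hφ : Injective φ) (h : HasFolnerBound K m) :
    HasFolnerBound H m := by
  intro ε hε S
  obtain ⟨F, hF, hFm⟩ := h ε hε (S.image φ)
  obtain ⟨A, hA, hAF, hArange⟩ :=
    hF.exists_subset_subgroup (R := φ.range) fun _ hs => by
      obtain ⟨s, -, rfl⟩ := mem_image.1 hs
      exact ⟨s, rfl⟩
  obtain ⟨F', -, rfl⟩ := subset_image_iff.1 (show A ⊆ (A.preimage φ hφ.injOn).image φ by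
    rw [image_preimage]; exact fun a ha => mem_filter.2 ⟨ha, hArange a ha⟩)
  refine ⟨F', (isFolnerSet_image_iff hφ.injOn).1 hA, ?_⟩
  rw [← card_image_of_injective F' hφ, ← card_image_of_injective S hφ]
  exact hAF.trans hFm

theorem UniformlyAmenableGroup.of_injective {φ : H →* K} (hφ : Injective φ)
    (h : UniformlyAmenableGroup K) : UniformlyAmenableGroup H := by
  obtain ⟨m, hm⟩ := uniformlyAmenableGroup_iff.1 h
  exact uniformlyAmenableGroup_iff.2 ⟨m, hm.of_injective hφ⟩

/-- A Følner set for the image of `S` lies, after translation, in the image of a ball whose radius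
is bounded by `m`; a map injective on that ball lifts it to a Følner set for `S`. -/
theorem HasFolnerBound.of_forall_injOn {ι : Type*} {Q : ι → Type*} [∀ i, Group (Q i)]
    (φ : ∀ i, K →* Q i) (hφ : ∀ X : Finset K, ∃ i, Set.InjOn (φ i) X)
    (h : ∀ i, HasFolnerBound (Q i) m) : HasFolnerBound K m := by
  intro ε hε S
  set T := insert 1 (S⁻¹ * S)
  obtain ⟨i, hinj⟩ := hφ (insert 1 S * T ^ m ε S.card)
  have hS : (S.image (φ i)).card = S.card := card_image_of_injOn (hinj.mono (coe_subset.2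
    ((subset_insert 1 S).trans (subset_mul_left _ (one_mem_pow (mem_insert_self 1 _))))))
  obtain ⟨F', hF', hF'm⟩ := h i ε hε (S.image (φ i))
  obtain ⟨A, hA, hAF', hAT⟩ := hF'.exists_subset_pow (T := T.image (φ i))
    (mem_image.2 ⟨1, mem_insert_self 1 _, map_one _⟩)
    (by rw [← image_inv, ← image_mul]; exact image_subset_image (subset_insert 1 _))
  have hAk : A ⊆ (T ^ m ε S.card).image (φ i) := by
    rw [image_pow]
    exact hAT.trans (pow_subset_pow_right (mem_image.2 ⟨1, mem_insert_self 1 _, map_one _⟩)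
      (hF'm.trans_eq (by rw [hS])))
  obtain ⟨F, hFT, rfl⟩ := subset_image_iff.1 hAk
  have hinjF : Set.InjOn (φ i) ↑(insert 1 S * F) := hinj.mono (mul_subset_mul_left hFT)
  refine ⟨F, (isFolnerSet_image_iff hinjF).1 hA, ?_⟩
  rw [← card_image_of_injOn (hinjF.mono (coe_subset.2 (subset_mul_right F (mem_insert_self 1 S)))),
    ← hS]
  exact hAF'.trans hF'm

end Bounds

theorem directed_FIN {G : Type*} [Group G] : Directed (· ≥ ·) fun N : FIN G => N.1 :=
  fun N M =>
    have := N.2.2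
    have := M.2.2
    ⟨⟨N.1 ⊓ M.1, inferInstance, inferInstance⟩, inf_le_left, inf_le_right⟩

namespace profiniteCompletion

variable (G : Type*) [Group G]

def ofGroup : G →* profiniteCompletion G :=
  (MonoidHom.pi fun N : FIN G => QuotientGroup.mk' N.1).codRestrict _ fun _ _ _ _ => rfl

def proj (N : FIN G) : profiniteCompletion G →* G ⧸ N.1 :=
  (Pi.evalMonoidHom (fun N : FIN G => G ⧸ N.1) N).comp (profiniteCompletion G).subtype

variable {G}

theorem ofGroup_injective (h : ResiduallyFinite G) : Injective (ofGroup G) := by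
  refine (injective_iff_map_eq_one _).2 fun g hg => by_contra fun hg1 => ?_
  obtain ⟨N, hN, hfin, hgN⟩ := h g hg1
  exact hgN ((QuotientGroup.eq_one_iff g).1 (congrFun (congrArg Subtype.val hg) ⟨N, hN, hfin⟩))

theorem exists_injOn_proj (X : Finset (profiniteCompletion G)) : ∃ N, Set.InjOn (proj G N) X := by
  have hsep : ∀ p : profiniteCompletion G × profiniteCompletion G,
      ∃ N : FIN G, p.1 ≠ p.2 → p.1.1 N ≠ p.2.1 N := by
    intro p
    by_cases hp : p.1 = p.2
    · exact ⟨⟨⊤, inferInstance, inferInstance⟩, fun h => (h hp).elim⟩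
    · obtain ⟨N, hN⟩ := Function.ne_iff.1 (Subtype.coe_ne_coe.2 hp)
      exact ⟨N, fun _ => hN⟩
  choose N hN using hsep
  have : Nonempty (FIN G) := ⟨N (1, 1)⟩
  obtain ⟨N₀, hN₀⟩ := directed_FIN.finset_le ((X ×ˢ X).image N)
  refine ⟨N₀, fun x hx y hy hxy => by_contra fun hne => hN (x, y) hne ?_⟩
  have hle := hN₀ _ (mem_image_of_mem N (a := (x, y)) (mem_product.2 ⟨mem_coe.1 hx, mem_coe.1 hy⟩))
  rw [← x.2 N₀ _ hle, ← y.2 N₀ _ hle]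
  exact congrArg _ hxy

end profiniteCompletion

theorem uniformlyAmenableGroup_profiniteCompletion_iff {G : Type*} [Group G]
    (h : ResiduallyFinite G) :
    UniformlyAmenableGroup (profiniteCompletion G) ↔ UniformlyAmenableGroup G := by
  refine ⟨fun hG => hG.of_injective (profiniteCompletion.ofGroup_injective h), fun hG => ?_⟩
  obtain ⟨m, hm⟩ := uniformlyAmenableGroup_iff.1 hG
  exact uniformlyAmenableGroup_iff.2 ⟨_, .of_forall_injOn (profiniteCompletion.proj G)
    profiniteCompletion.exists_injOn_proj
    fun N => hm.of_surjective (QuotientGroup.mk'_surjective N.1)⟩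

/-- If `G₁` and `G₂` are residually finite groups with isomorphic profinite completions,
then `G₁` is uniformly amenable if and only if `G₂` is uniformly amenable. -/
theorem uniformlyAmenable_profinite_invariant (G₁ G₂ : Type*) [Group G₁] [Group G₂]
    (h₁ : ResiduallyFinite G₁) (h₂ : ResiduallyFinite G₂)
    (e : profiniteCompletion G₁ ≃* profiniteCompletion G₂) :
    UniformlyAmenableGroup G₁ ↔ UniformlyAmenableGroup G₂ := by
  rw [← uniformlyAmenableGroup_profiniteCompletion_iff h₁,
    ← uniformlyAmenableGroup_profiniteCompletion_iff h₂]
  exact ⟨fun h => h.of_injective (φ := e.symm.toMonoidHom) e.symm.injective,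
    fun h => h.of_injective (φ := e.toMonoidHom) e.injective⟩
end

section
/- For every finite group G and every index set I, the direct power G^I (the full Cartesian power) is uniformly amenable. More precisely, every n-element subset S of G^I generates a subgroup isomorphic to a subgroup of a quotient of G^{|G|^n}, so the Følner function of G^I depends only on G and n. -/
open Pointwise

attribute [local instance] Classical.propDecidable

/-- For every finite group `G` and every index set `I` the full Cartesian power `G^I` is
uniformly amenable.  More precisely, every `n`-element subset `S` of `G^I` is contained in
the image of a homomorphism from `G^{|G|^n}`, so the subgroup generated by `S` is (a
subgroup of) a quotient of `G^{|G|^n}` and the Følner function of `G^I` depends only on `G`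
and `n`. -/
theorem uniformlyAmenable_direct_power (G : Type*) [Group G] [Fintype G] (I : Type*) :
    UniformlyAmenableGroup (I → G) ∧
    ∀ S : Finset (I → G),
      ∃ φ : (Fin (Fintype.card G ^ S.card) → G) →* (I → G),
        (S : Set (I → G)) ⊆ Set.range φ := by
  classical
  have key : ∀ S : Finset (I → G),
      ∃ φ : (Fin (Fintype.card G ^ S.card) → G) →* (I → G),
        (S : Set (I → G)) ⊆ Set.range φ := by
    intro S
    have hcard : Fintype.card ((↑S : Set (I → G)) → G) = Fintype.card G ^ S.card := by
      simp [Fintype.card_fun, Fintype.card_coe]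
    let e : ((↑S : Set (I → G)) → G) ≃ Fin (Fintype.card G ^ S.card) :=
      Fintype.equivFinOfCardEq hcard
    refine ⟨{ toFun := fun g i => g (e (fun s => (s : I → G) i)),
              map_one' := rfl,
              map_mul' := fun a b => rfl }, ?_⟩
    intro s hs
    refine ⟨fun k => e.symm k ⟨s, hs⟩, ?_⟩
    funext i
    simp
  refine ⟨?_, key⟩
  refine ⟨fun _ n => Fintype.card G ^ (Fintype.card G ^ n), fun ε hε S => ?_⟩
  obtain ⟨φ, hφ⟩ := key S
  refine ⟨Finset.univ.image φ, ⟨φ 1, Finset.mem_image_of_mem _ (Finset.mem_univ _)⟩, ?_, ?_⟩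
  · calc (Finset.univ.image φ).card ≤ Finset.univ.card := Finset.card_image_le
      _ = Fintype.card G ^ (Fintype.card G ^ S.card) := by simp [Fintype.card_fun]
  · have hsub : S * Finset.univ.image φ ⊆ Finset.univ.image φ := by
      intro x hx
      rw [Finset.mem_mul] at hx
      obtain ⟨s, hs, f, hf, rfl⟩ := hx
      obtain ⟨a, ha⟩ := hφ hs
      obtain ⟨b, _, rfl⟩ := Finset.mem_image.mp hf
      exact Finset.mem_image.mpr ⟨a * b, Finset.mem_univ _, by rw [map_mul, ha]⟩
    have hle := Finset.card_le_card hsub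
    have h0 : (0:ℝ) ≤ (Finset.univ.image φ).card := Nat.cast_nonneg _
    calc ((S * Finset.univ.image φ).card : ℝ) ≤ (Finset.univ.image φ).card := by
          exact_mod_cast hle
      _ ≤ (1 + ε) * (Finset.univ.image φ).card := by nlinarith
end
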